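/- Let A be a real symmetric n×n matrix with eigenvalues λ₁,…,λₙ and suppose κ + δ·λᵢ·λⱼ ≥ 0 for all i < j (nonnegative sectional curvature), where κ, δ ∈ ℝ. Then κ·(n·tr(A²) − (tr A)²) + δ·((tr A)·tr(A³) − (tr A²)²) ≥ 0. -/

import Mathlib

/-!
Weighting `(λᵢ - λⱼ)²` by the sectional curvature `κ + δ λᵢ λⱼ` and summing over all pairs gives
twice the left-hand side, once `tr Aᵏ` is written as the power sum `∑ λᵢᵏ`.
-/

open Finset Matrix

theorem Matrix.IsHermitian.trace_pow_eq_sum_eigenvalues_pow {𝕜 n : Type*} [RCLike 𝕜]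
    [Fintype n] [DecidableEq n] {A : Matrix n n 𝕜} (hA : A.IsHermitian) (k : ℕ) :
    (A ^ k).trace = ∑ i, (hA.eigenvalues i : 𝕜) ^ k := by
  conv_lhs => rw [hA.spectral_theorem, ← map_pow, Unitary.conjStarAlgAut_apply,
    trace_mul_cycle, Unitary.coe_star_mul_self, one_mul, diagonal_pow, trace_diagonal]
  simp

theorem sum_sum_mul_sub_sq_eq {ι R : Type*} [Fintype ι] [CommRing R] (l : ι → R) (κ δ : R) :
    ∑ i, ∑ j, (κ + δ * l i * l j) * (l i - l j) ^ 2
      = 2 * (κ * (Fintype.card ι * ∑ i, l i ^ 2 - (∑ i, l i) ^ 2)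
        + δ * ((∑ i, l i) * ∑ i, l i ^ 3 - (∑ i, l i ^ 2) ^ 2)) := by
  have expand : ∀ i j, (κ + δ * l i * l j) * (l i - l j) ^ 2
      = κ * l i ^ 2 + ((-2 * κ * l i + δ * l i ^ 3) * l j
        + ((κ - 2 * δ * l i ^ 2) * l j ^ 2 + δ * l i * l j ^ 3)) :=
    fun i j => by ring
  simp only [expand, sum_add_distrib, sum_sub_distrib, ← mul_sum, ← sum_mul, sum_const,
    card_univ, nsmul_eq_mul]
  ring

theorem sum_sum_nonneg_of_symm {ι : Type*} [Fintype ι] [LinearOrder ι] {f : ι → ι → ℝ}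
    (hsymm : ∀ i j, f i j = f j i) (hdiag : ∀ i, 0 ≤ f i i) (hlt : ∀ i j, i < j → 0 ≤ f i j) :
    0 ≤ ∑ i, ∑ j, f i j := by
  refine sum_nonneg fun i _ => sum_nonneg fun j _ => ?_
  rcases lt_trichotomy i j with hij | rfl | hji
  · exact hlt i j hij
  · exact hdiag i
  · exact hsymm j i ▸ hlt j i hji

/-- If the "sectional curvatures" `κ + δ λᵢ λⱼ` are nonnegative for `i < j`, then
`κ (n tr A² − (tr A)²) + δ ((tr A)(tr A³) − (tr A²)²) ≥ 0` for a symmetric matrix `A`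
with eigenvalues `λ i`. -/
theorem stmt_8 {n : ℕ} (A : Matrix (Fin n) (Fin n) ℝ) (hA : A.IsHermitian) (κ δ : ℝ)
    (h : ∀ i j : Fin n, i < j →
      0 ≤ κ + δ * hA.eigenvalues i * hA.eigenvalues j) :
    0 ≤ κ * ((n : ℝ) * (A ^ 2).trace - A.trace ^ 2)
      + δ * (A.trace * (A ^ 3).trace - ((A ^ 2).trace) ^ 2) := by
  set l := hA.eigenvalues
  have weighted_sum_nonneg : 0 ≤ ∑ i, ∑ j, (κ + δ * l i * l j) * (l i - l j) ^ 2 :=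
    sum_sum_nonneg_of_symm (fun i j => by ring) (fun i => by simp)
      (fun i j hij => mul_nonneg (h i j hij) (sq_nonneg _))
  rw [sum_sum_mul_sub_sq_eq, Fintype.card_fin] at weighted_sum_nonneg
  have trace_pow (k : ℕ) : (A ^ k).trace = ∑ i, l i ^ k := by
    simpa using hA.trace_pow_eq_sum_eigenvalues_pow k
  have trace_eq : A.trace = ∑ i, l i := by simpa using hA.trace_eq_sum_eigenvalues
  rw [trace_eq, trace_pow, trace_pow]
  linarith
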